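/- arXiv:1904.09873 — 2 statements merged into one kernel-verified Lean document; each statement's English description precedes it below -/
import Mathlib

section
/- Let χ be a unitary character of A, J a closed subgroup of K contained in the stabilizer K_χ, and μ : J → U(d) a continuous unitary representation. For (k,a) ∈ G define the unitary operator π(k,a) on L²(K, ℂ^d) by π(k,a)(ξ)(h) := χ((h⁻¹k)·a) · ξ(k⁻¹h). Then the closed subspace H_{μ,χ} := {ξ ∈ L²(K, ℂ^d) : ξ(hl) = μ(l)⁻¹(ξ(h)) for all l ∈ J, a.e. h ∈ K} is invariant under π(k,a) for every (k,a) ∈ G, so that π restricts to a unitary representation of G on H_{μ,χ}. -/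
open MeasureTheory

/-- The operator `π(k,a)` on functions `K → ℂ^d`:
`π(k,a)(ξ)(h) := χ((h⁻¹k)·a) · ξ(k⁻¹h)`. -/
noncomputable def piRep {K A : Type} [Group K] [AddCommGroup A]
    (act : K →* Multiplicative (AddAut A)) (χ : A → ℂ) {d : ℕ} (k : K) (a : A)
    (ξ : K → EuclideanSpace ℂ (Fin d)) : K → EuclideanSpace ℂ (Fin d) :=
  fun h => χ (Multiplicative.toAdd (act (h⁻¹ * k)) a) • ξ (k⁻¹ * h)

/-!
`π(k,a)ξ` is the left translate `h ↦ ξ(k⁻¹h)` multiplied by the scalar function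
`h ↦ χ((h⁻¹k)·a)`. Left translation preserves `L²` by left invariance of Haar measure, and it
preserves right `J`-equivariance because left and right translations commute. The scalar factor
is continuous of modulus one, so it preserves `L²`, and it is right `J`-invariant because `J`
fixes `χ`, so it preserves equivariance.
-/

section Equivariance

variable {K E : Type*} [Group K] [MeasurableSpace K] {μK : Measure K} {J : Subgroup K}

theorem ae_mul_right_comp_mul_left [MeasurableMul K] [μK.IsMulLeftInvariant]
    {ξ : K → E} {ρ : J → E → E} (hξ : ∀ l : J, ∀ᵐ h ∂μK, ξ (h * l) = ρ l (ξ h)) (k : K) (l : J) :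
    ∀ᵐ h ∂μK, ξ (k * (h * l)) = ρ l (ξ (k * h)) := by
  have hmp : MeasurePreserving (k * ·) μK μK := measurePreserving_mul_left μK k
  filter_upwards [hmp.quasiMeasurePreserving.tendsto_ae.eventually (hξ l)] with h hh
  rwa [← mul_assoc]

theorem ae_smul_mul_right {𝕜 : Type*} [Semiring 𝕜] [AddCommMonoid E] [Module 𝕜 E]
    {c : K → 𝕜} (hc : ∀ (h : K) (l : J), c (h * l) = c h)
    {ξ : K → E} {ρ : J → E →ₗ[𝕜] E} (hξ : ∀ l : J, ∀ᵐ h ∂μK, ξ (h * l) = ρ l (ξ h)) (l : J) :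
    ∀ᵐ h ∂μK, (c • ξ) (h * l) = ρ l ((c • ξ) h) := by
  filter_upwards [hξ l] with h hh
  rw [Pi.smul_apply', Pi.smul_apply', hc, hh, map_smul]

end Equivariance

section SemidirectRepresentation

variable {K A : Type} [Group K] [AddCommGroup A]
  {act : K →* Multiplicative (AddAut A)} {χ : A → ℂ} {d : ℕ}

theorem piRep_eq_smul (k : K) (a : A) (ξ : K → EuclideanSpace ℂ (Fin d)) :
    piRep act χ k a ξ =
      (fun h => χ (Multiplicative.toAdd (act (h⁻¹ * k)) a)) • fun h => ξ (k⁻¹ * h) :=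
  rfl

theorem character_coeff_mul_right {J : Subgroup K}
    (hJχ : ∀ (l : J) (a : A), χ (Multiplicative.toAdd (act (l : K)⁻¹) a) = χ a)
    (k : K) (a : A) (h : K) (l : J) :
    χ (Multiplicative.toAdd (act ((h * l)⁻¹ * k)) a) =
      χ (Multiplicative.toAdd (act (h⁻¹ * k)) a) := by
  rw [mul_inv_rev, mul_assoc, map_mul]
  exact hJχ l _

variable [TopologicalSpace K] [IsTopologicalGroup K] [MeasurableSpace K] [BorelSpace K]
  {μK : Measure K} [μK.IsMulLeftInvariant] [TopologicalSpace A]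

theorem memLp_piRep (hact : Continuous fun p : K × A => Multiplicative.toAdd (act p.1) p.2)
    (hχcont : Continuous χ) (hχnorm : ∀ a, ‖χ a‖ = 1)
    {ξ : K → EuclideanSpace ℂ (Fin d)} (hξ : MemLp ξ 2 μK) (k : K) (a : A) :
    MemLp (piRep act χ k a ξ) 2 μK := by
  have hcont : Continuous fun h : K => χ (Multiplicative.toAdd (act (h⁻¹ * k)) a) :=
    hχcont.comp (hact.comp ((continuous_inv.mul continuous_const).prodMk continuous_const))
  have hcoeff : MemLp (fun h : K => χ (Multiplicative.toAdd (act (h⁻¹ * k)) a)) ⊤ μK :=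
    memLp_top_of_bound hcont.aestronglyMeasurable 1 (.of_forall fun _ => (hχnorm _).le)
  rw [piRep_eq_smul]
  exact (hξ.comp_measurePreserving (measurePreserving_mul_left μK k⁻¹)).smul hcoeff

end SemidirectRepresentation

theorem stmt12_general {K A : Type} [Group K] [TopologicalSpace K] [IsTopologicalGroup K]
    [MeasurableSpace K] [BorelSpace K]
    (μK : Measure K) [μK.IsHaarMeasure]
    [AddCommGroup A] [TopologicalSpace A]
    (act : K →* Multiplicative (AddAut A)) (hact : Continuous fun p : K × A => Multiplicative.toAdd (act p.1) p.2)
    (χ : A → ℂ) (hχnorm : ∀ a, ‖χ a‖ = 1)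
    (hχcont : Continuous χ)
    (J : Subgroup K)
    (hJχ : ∀ (l : ↥J) (a : A), χ (Multiplicative.toAdd (act (l : K)⁻¹) a) = χ a)
    (d : ℕ)
    (μ : ↥J →* Matrix.unitaryGroup (Fin d) ℂ)
    (ξ : K → EuclideanSpace ℂ (Fin d)) (hξ : MemLp ξ 2 μK)
    (hequiv : ∀ l : ↥J, ∀ᵐ h ∂μK,
      ξ (h * (l : K)) =
        Matrix.toEuclideanLin (((μ l)⁻¹ : Matrix.unitaryGroup (Fin d) ℂ) :
          Matrix (Fin d) (Fin d) ℂ) (ξ h)) :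
    ∀ (k : K) (a : A),
      MemLp (piRep act χ k a ξ) 2 μK ∧
        ∀ l : ↥J, ∀ᵐ h ∂μK,
          piRep act χ k a ξ (h * (l : K)) =
            Matrix.toEuclideanLin (((μ l)⁻¹ : Matrix.unitaryGroup (Fin d) ℂ) :
              Matrix (Fin d) (Fin d) ℂ) (piRep act χ k a ξ h) := by
  intro k a
  refine ⟨memLp_piRep hact hχcont hχnorm hξ k a, fun l => ?_⟩
  rw [piRep_eq_smul]
  exact ae_smul_mul_right (ξ := fun h => ξ (k⁻¹ * h)) (character_coeff_mul_right hJχ k a)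
    (ae_mul_right_comp_mul_left hequiv k⁻¹) l

/-- Let `χ` be a unitary character of `A`, `J ⊆ K_χ` a closed subgroup of `K`
and `μ` a continuous unitary representation of `J`.  The closed subspace
`H_{μ,χ}` of `L²(K, ℂ^d)` of `μ`-equivariant functions is invariant under every
`π(k,a)`, `(k,a) ∈ G`: if `ξ ∈ H_{μ,χ}` then `π(k,a)ξ ∈ L²(K, ℂ^d)` and
`π(k,a)ξ` again satisfies the equivariance condition. -/
theorem stmt12 {K A : Type} [Group K] [TopologicalSpace K] [IsTopologicalGroup K]
    [CompactSpace K] [T2Space K] [MeasurableSpace K] [BorelSpace K]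
    (μK : Measure K) [μK.IsHaarMeasure] [IsProbabilityMeasure μK]
    [AddCommGroup A] [TopologicalSpace A] [IsTopologicalAddGroup A]
    [LocallyCompactSpace A] [T2Space A]
    (act : K →* Multiplicative (AddAut A)) (hact : Continuous fun p : K × A => Multiplicative.toAdd (act p.1) p.2)
    (χ : A → ℂ) (hχnorm : ∀ a, ‖χ a‖ = 1)
    (hχmul : ∀ a b, χ (a + b) = χ a * χ b) (hχcont : Continuous χ)
    (J : Subgroup K) (hJ : IsClosed (J : Set K))
    (hJχ : ∀ (l : ↥J) (a : A), χ (Multiplicative.toAdd (act (l : K)⁻¹) a) = χ a)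
    (d : ℕ) (hd : 0 < d)
    (μ : ↥J →* Matrix.unitaryGroup (Fin d) ℂ) (hμc : Continuous μ)
    (ξ : K → EuclideanSpace ℂ (Fin d)) (hξ : MemLp ξ 2 μK)
    (hequiv : ∀ l : ↥J, ∀ᵐ h ∂μK,
      ξ (h * (l : K)) =
        Matrix.toEuclideanLin (((μ l)⁻¹ : Matrix.unitaryGroup (Fin d) ℂ) :
          Matrix (Fin d) (Fin d) ℂ) (ξ h)) :
    ∀ (k : K) (a : A),
      MemLp (piRep act χ k a ξ) 2 μK ∧
        ∀ l : ↥J, ∀ᵐ h ∂μK,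
          piRep act χ k a ξ (h * (l : K)) =
            Matrix.toEuclideanLin (((μ l)⁻¹ : Matrix.unitaryGroup (Fin d) ℂ) :
              Matrix (Fin d) (Fin d) ℂ) (piRep act χ k a ξ h) :=
  stmt12_general μK act hact χ hχnorm hχcont J hJχ d μ ξ hξ hequiv
end

section
/- Let L be a closed subgroup of K (with normalized Haar measure) and ν : L → U(d) a continuous unitary representation. Let f : K × A → ℂ be continuous with compact support. Let (χ_m)_{m∈ℕ} be a sequence of unitary characters of A converging pointwise on A to a unitary character χ_∞, and assume that L is contained in the stabilizer K_{χ_m} of each χ_m and in K_{χ_∞}. For a unitary character χ fixed by L, let τ_{ν,χ}(f) denote the bounded operator on L²(K, ℂ^d) given by τ_{ν,χ}(f)(φ)(x) := ∫_K ( ∫_L f̂²(xly⁻¹, y·χ) ν(l) dl )(φ(y)) dy. Then lim_{m→∞} ‖τ_{ν,χ_m}(f) − τ_{ν,χ_∞}(f)‖_op = 0, i.e. the operators τ_{ν,χ_m}(f) converge to τ_{ν,χ_∞}(f) in operator norm. -/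
/-! The operators `τ_{ν,χ}(f)` are integral operators on `L²(K, ℂ^d)` with continuous
operator-valued kernels `N_χ(x, y) = ∫_L f̂²(xly⁻¹, y·χ) ν(l) dl`, so by Cauchy–Schwarz the
operator norm of `τ_{ν,χ_m}(f) - τ_{ν,χ_∞}(f)` is bounded by the Hilbert–Schmidt norm
`‖N_{χ_m} - N_{χ_∞}‖_{L²(K×K)}`. Since the characters are unimodular and `f` has compact
support, the kernels are uniformly bounded, and pointwise convergence `χ_m → χ_∞` gives
`N_{χ_m} → N_{χ_∞}` pointwise by dominated convergence over `A` and then over `L`. A last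
dominated convergence over `K × K` sends the Hilbert–Schmidt norm to zero; no uniform
convergence of the characters is needed. -/

open MeasureTheory

/-- The operator `τ_{ν,χ}(f)` on `L²(K, ℂ^d)`:
`τ_{ν,χ}(f)(φ)(x) := ∫_K (∫_L f̂²(xly⁻¹, y·χ) ν(l) dl)(φ(y)) dy`, where
`f̂²(k, χ')(= ∫_A χ'(a) f(k,a) da)` is the partial Fourier transform and
`(y·χ)(a) = χ(y⁻¹·a)`. -/
noncomputable def tauOp {K A : Type} [Group K] [TopologicalSpace K] [MeasurableSpace K]
    [AddCommGroup A] [MeasurableSpace A] (μK : Measure K) (μA : Measure A)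
    (act : K →* Multiplicative (AddAut A)) (χ : A → ℂ)
    {L : Subgroup K} (μL : Measure ↥L) {d : ℕ}
    (ν : ↥L →* Matrix.unitaryGroup (Fin d) ℂ)
    (f : K × A → ℂ) (φ : K → EuclideanSpace ℂ (Fin d)) :
    K → EuclideanSpace ℂ (Fin d) :=
  fun x => ∫ y : K, ∫ l : ↥L,
    (∫ a : A, χ (Multiplicative.toAdd (act y⁻¹) a) * f (x * (l : K) * y⁻¹, a) ∂μA) •
      Matrix.toEuclideanLin ((ν l : Matrix (Fin d) (Fin d) ℂ)) (φ y) ∂μL ∂μK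

open Filter Topology
open scoped ENNReal

/- Iterated rather than over `μ.prod ν`: `K` need not be second countable, so a continuous kernel on
`K × K` need not be measurable for the product σ-algebra and Tonelli is unavailable. -/
noncomputable def kernelL2Norm {X Y E : Type*} [MeasurableSpace X] [MeasurableSpace Y] [ENorm E]
    (μ : Measure X) (ν : Measure Y) (k : X → Y → E) : ℝ≥0∞ :=
  (∫⁻ x, ∫⁻ y, ‖k x y‖ₑ ^ (2 : ℝ) ∂ν ∂μ) ^ (2⁻¹ : ℝ)

section

variable {X Y E : Type*} [TopologicalSpace X] [TopologicalSpace Y] [CompactSpace Y]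
  [MeasurableSpace Y] [OpensMeasurableSpace Y] [NormedAddCommGroup E]
  {ν : Measure Y} [IsFiniteMeasure ν]

theorem continuous_integral_of_compactSpace [NormedSpace ℝ E] {F : X × Y → E}
    (hF : Continuous F) :
    Continuous fun x => ∫ y, F (x, y) ∂ν := by
  rw [← continuousOn_univ]
  exact continuousOn_integral_of_compact_support isCompact_univ hF.continuousOn
    fun _ y _ hy => absurd (Set.mem_univ y) hy

variable [MeasurableSpace X] [OpensMeasurableSpace X]

theorem measurable_lintegral_enorm_of_continuous {F : X × Y → E} (hF : Continuous F) :
    Measurable fun x => ∫⁻ y, ‖F (x, y)‖ₑ ∂ν := by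
  have hint : ∀ x, Integrable (fun y => F (x, y)) ν := fun x =>
    (hF.comp (Continuous.prodMk_right x)).integrable_of_hasCompactSupport
      (HasCompactSupport.of_compactSpace _)
  simp_rw [← ofReal_integral_norm_eq_lintegral_enorm (hint _)]
  exact ENNReal.measurable_ofReal.comp
    (continuous_integral_of_compactSpace hF.norm).measurable

theorem tendsto_kernelL2Norm_zero {μ : Measure X} [IsFiniteMeasure μ]
    {F : ℕ → X → Y → E} (hF : ∀ n, Continuous (Function.uncurry (F n))) {C : ℝ}
    (hC : ∀ n x y, ‖F n x y‖ ≤ C) (hlim : ∀ x y, Tendsto (fun n => F n x y) atTop (𝓝 0)) :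
    Tendsto (fun n => kernelL2Norm μ ν (F n)) atTop (𝓝 0) := by
  set c : ℝ≥0∞ := ENNReal.ofReal C ^ (2 : ℝ)
  have hbound : ∀ n x y, ‖F n x y‖ₑ ^ (2 : ℝ) ≤ c := fun n x y =>
    ENNReal.rpow_le_rpow ((ofReal_norm _).symm.trans_le (ENNReal.ofReal_le_ofReal (hC n x y)))
      zero_le_two
  have hc : c ≠ ∞ := ENNReal.rpow_ne_top_of_nonneg zero_le_two ENNReal.ofReal_ne_top
  have hinner : ∀ x, Tendsto (fun n => ∫⁻ y, ‖F n x y‖ₑ ^ (2 : ℝ) ∂ν) atTop (𝓝 0) := by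
    intro x
    simpa using tendsto_lintegral_of_dominated_convergence' (μ := ν) (f := 0) (fun _ => c)
      (fun n =>
        (((hF n).comp (Continuous.prodMk_right x)).enorm.measurable.pow_const _).aemeasurable)
      (fun n => ae_of_all _ (hbound n x))
      (by simp [ENNReal.mul_eq_top, hc])
      (ae_of_all _ fun y => by simpa using ((hlim x y).enorm.ennrpow_const (2 : ℝ)))
  have hmeas : ∀ n, Measurable fun x => ∫⁻ y, ‖F n x y‖ₑ ^ (2 : ℝ) ∂ν := by
    intro n
    have hsq : ∀ v : E, ‖v‖ₑ ^ (2 : ℝ) = ‖‖v‖ ^ 2‖ₑ := fun v => by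
      rw [enorm_pow, enorm_norm, ENNReal.rpow_two]
    simp_rw [hsq]
    exact measurable_lintegral_enorm_of_continuous
      ((hF n).norm.pow 2 : Continuous fun p : X × Y => ‖F n p.1 p.2‖ ^ 2)
  have houter : Tendsto (fun n => ∫⁻ x, ∫⁻ y, ‖F n x y‖ₑ ^ (2 : ℝ) ∂ν ∂μ) atTop (𝓝 0) := by
    simpa using tendsto_lintegral_of_dominated_convergence' (f := 0) (fun _ => c * ν Set.univ)
      (fun n => (hmeas n).aemeasurable)
      (fun n => ae_of_all _ fun x =>
        (lintegral_mono (hbound n x)).trans_eq (lintegral_const c))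
      (by simp [ENNReal.mul_eq_top, hc])
      (ae_of_all _ hinner)
  simpa [kernelL2Norm] using houter.ennrpow_const (2⁻¹ : ℝ)
end

theorem eLpNorm_integral_clm_apply_le {X E F : Type*} [MeasurableSpace X] {μ : Measure X}
    [NormedAddCommGroup E] [NormedSpace ℂ E] [NormedAddCommGroup F] [NormedSpace ℂ F]
    {k : X → X → E →L[ℂ] F} (hk : ∀ x, AEStronglyMeasurable (k x) μ)
    {φ : X → E} (hφ : MemLp φ 2 μ) :
    eLpNorm (fun x => ∫ y, k x y (φ y) ∂μ) 2 μ ≤ kernelL2Norm μ μ k * eLpNorm φ 2 μ := by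
  have hφ2 : eLpNorm φ 2 μ = (∫⁻ y, ‖φ y‖ₑ ^ (2 : ℝ) ∂μ) ^ (2⁻¹ : ℝ) := by
    simp [eLpNorm_eq_lintegral_rpow_enorm_toReal two_ne_zero ENNReal.ofNat_ne_top]
  have hpointwise : ∀ x, ‖∫ y, k x y (φ y) ∂μ‖ₑ ≤
      (∫⁻ y, ‖k x y‖ₑ ^ (2 : ℝ) ∂μ) ^ (2⁻¹ : ℝ) * eLpNorm φ 2 μ := fun x =>
    calc ‖∫ y, k x y (φ y) ∂μ‖ₑ ≤ ∫⁻ y, ‖k x y (φ y)‖ₑ ∂μ := enorm_integral_le_lintegral_enorm _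
      _ ≤ ∫⁻ y, ‖k x y‖ₑ * ‖φ y‖ₑ ∂μ := lintegral_mono fun y => (k x y).le_opENorm _
      _ ≤ _ := by
        rw [hφ2]
        simpa [one_div] using ENNReal.lintegral_mul_le_Lp_mul_Lq μ Real.HolderConjugate.two_two
          (hk x).enorm hφ.1.enorm
  calc eLpNorm (fun x => ∫ y, k x y (φ y) ∂μ) 2 μ
      ≤ eLpNorm (fun x => (∫⁻ y, ‖k x y‖ₑ ^ (2 : ℝ) ∂μ) ^ (2⁻¹ : ℝ) * eLpNorm φ 2 μ) 2 μ :=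
        eLpNorm_mono_enorm fun x => (hpointwise x).trans_eq (enorm_eq_self _).symm
    _ = _ := by
        rw [kernelL2Norm, eLpNorm_eq_lintegral_rpow_enorm_toReal two_ne_zero ENNReal.ofNat_ne_top]
        simp only [enorm_eq_self, ENNReal.toReal_ofNat]
        have h2 : (2 : ℝ) ≠ 0 := two_ne_zero
        simp_rw [ENNReal.mul_rpow_of_nonneg _ _ zero_le_two, ENNReal.rpow_inv_rpow h2]
        rw [lintegral_mul_const' _ _ (ENNReal.rpow_ne_top_of_nonneg zero_le_two hφ.eLpNorm_ne_top),
          ENNReal.mul_rpow_of_nonneg _ _ (by norm_num), one_div, ENNReal.rpow_rpow_inv h2]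

noncomputable def partialFourier {K A : Type*} [MeasurableSpace A] (μA : Measure A)
    (f : K × A → ℂ) (k : K) (χ' : A → ℂ) : ℂ :=
  ∫ a, χ' a * f (k, a) ∂μA

section PartialFourier

variable {K A : Type*} [TopologicalSpace K] [TopologicalSpace A] {f : K × A → ℂ}

theorem apply_eq_zero_of_notMem_snd_tsupport {k : K} {a : A}
    (ha : a ∉ Prod.snd '' tsupport f) : f (k, a) = 0 :=
  image_eq_zero_of_notMem_tsupport fun h => ha ⟨_, h, rfl⟩

theorem norm_mul_apply_le_indicator {B : ℝ} (hB : ∀ p, ‖f p‖ ≤ B) {u : A → ℂ}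
    (hu : ∀ a, ‖u a‖ ≤ 1) (k : K) (a : A) :
    ‖u a * f (k, a)‖ ≤ (Prod.snd '' tsupport f).indicator (fun _ => B) a := by
  by_cases ha : a ∈ Prod.snd '' tsupport f
  · rw [Set.indicator_of_mem ha, norm_mul]
    exact (mul_le_of_le_one_left (norm_nonneg _) (hu a)).trans (hB _)
  · rw [Set.indicator_of_notMem ha, apply_eq_zero_of_notMem_snd_tsupport ha, mul_zero, norm_zero]

variable [MeasurableSpace A] [OpensMeasurableSpace A] {μA : Measure A}
  [IsFiniteMeasureOnCompacts μA]

theorem continuous_partialFourier (hfc : Continuous f) (hfs : HasCompactSupport f)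
    {P : Type*} [TopologicalSpace P] {k : P → K} (hk : Continuous k) {U : P → A → ℂ}
    (hU : Continuous (Function.uncurry U)) :
    Continuous fun p => partialFourier μA f (k p) (U p) := by
  rw [← continuousOn_univ]
  refine continuousOn_integral_of_compact_support (hfs.image continuous_snd)
    (hU.mul (hfc.comp ((hk.comp continuous_fst).prodMk continuous_snd))).continuousOn ?_
  intro p a _ ha
  rw [apply_eq_zero_of_notMem_snd_tsupport ha, mul_zero]

variable [T2Space A]

theorem integrable_indicator_snd_tsupport (hfs : HasCompactSupport f) (B : ℝ) :
    Integrable ((Prod.snd '' tsupport f).indicator fun _ => B) μA :=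
  (integrable_indicator_iff (hfs.image continuous_snd).measurableSet).2
    (integrableOn_const (hfs.image continuous_snd).measure_lt_top.ne)

theorem norm_partialFourier_le (hfs : HasCompactSupport f) {B : ℝ} (hB : ∀ p, ‖f p‖ ≤ B)
    {u : A → ℂ} (hu : ∀ a, ‖u a‖ ≤ 1) (k : K) :
    ‖partialFourier μA f k u‖ ≤ μA.real (Prod.snd '' tsupport f) * B :=
  calc ‖partialFourier μA f k u‖
      ≤ ∫ a, (Prod.snd '' tsupport f).indicator (fun _ => B) a ∂μA :=
        norm_integral_le_of_norm_le (integrable_indicator_snd_tsupport hfs B)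
          (ae_of_all _ (norm_mul_apply_le_indicator hB hu k))
    _ = μA.real (Prod.snd '' tsupport f) * B :=
        integral_indicator_const _ (hfs.image continuous_snd).measurableSet

theorem tendsto_partialFourier (hfc : Continuous f) (hfs : HasCompactSupport f) {B : ℝ}
    (hB : ∀ p, ‖f p‖ ≤ B) {U : ℕ → A → ℂ} {u : A → ℂ} (hU : ∀ n, Continuous (U n))
    (hU1 : ∀ n a, ‖U n a‖ ≤ 1) (hlim : ∀ a, Tendsto (fun n => U n a) atTop (𝓝 (u a))) (k : K) :
    Tendsto (fun n => partialFourier μA f k (U n)) atTop (𝓝 (partialFourier μA f k u)) :=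
  tendsto_integral_of_dominated_convergence _
    (fun n => ((hU n).mul (hfc.comp (Continuous.prodMk_right k))).aestronglyMeasurable)
    (integrable_indicator_snd_tsupport hfs B)
    (fun n => ae_of_all _ (norm_mul_apply_le_indicator hB (hU1 n) k))
    (ae_of_all _ fun a => (hlim a).mul_const _)

end PartialFourier

section Matrix

variable {𝕜 n : Type*} [RCLike 𝕜] [Fintype n] [DecidableEq n]

theorem norm_toEuclideanCLM_le_one (U : Matrix.unitaryGroup n 𝕜) :
    ‖Matrix.toEuclideanCLM (n := n) (𝕜 := 𝕜) (U : Matrix n n 𝕜)‖ ≤ 1 :=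
  ContinuousLinearMap.opNorm_le_bound _ zero_le_one fun v => by
    rw [ContinuousLinearMap.norm_map_of_mem_unitary (Unitary.map_mem _ U.2), one_mul]

theorem continuous_toEuclideanCLM : Continuous (Matrix.toEuclideanCLM (n := n) (𝕜 := 𝕜)) :=
  LinearMap.continuous_of_finiteDimensional
    (Matrix.toEuclideanCLM (n := n) (𝕜 := 𝕜)).toAlgEquiv.toLinearEquiv.toLinearMap

end Matrix

noncomputable def tauKernel {K A : Type} [Group K] [MeasurableSpace K] [AddCommGroup A]
    [MeasurableSpace A] (μA : Measure A) (act : K →* Multiplicative (AddAut A)) (u : A → ℂ)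
    {L : Subgroup K} (μL : Measure L) {d : ℕ} (ν : L →* Matrix.unitaryGroup (Fin d) ℂ)
    (f : K × A → ℂ) (x y : K) : EuclideanSpace ℂ (Fin d) →L[ℂ] EuclideanSpace ℂ (Fin d) :=
  ∫ l, partialFourier μA f (x * l * y⁻¹) (fun a => u (Multiplicative.toAdd (act y⁻¹) a)) •
    Matrix.toEuclideanCLM (n := Fin d) (𝕜 := ℂ) (ν l : Matrix (Fin d) (Fin d) ℂ) ∂μL

section TauKernel

variable {K A : Type} [Group K] [TopologicalSpace K] [AddCommGroup A] [TopologicalSpace A]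
  [MeasurableSpace A] [OpensMeasurableSpace A] {μA : Measure A} [IsFiniteMeasureOnCompacts μA]
  {act : K →* Multiplicative (AddAut A)} {L : Subgroup K} {d : ℕ}
  {ν : L →* Matrix.unitaryGroup (Fin d) ℂ} {f : K × A → ℂ}

theorem norm_tauKernel_integrand_le [T2Space A] (hfs : HasCompactSupport f) {B : ℝ}
    (hB : ∀ p, ‖f p‖ ≤ B) {u : A → ℂ} (hu : ∀ a, ‖u a‖ ≤ 1) (x y : K) (l : L) :
    ‖partialFourier μA f (x * l * y⁻¹) (fun a => u (Multiplicative.toAdd (act y⁻¹) a)) •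
        Matrix.toEuclideanCLM (n := Fin d) (𝕜 := ℂ) (ν l : Matrix (Fin d) (Fin d) ℂ)‖ ≤
      μA.real (Prod.snd '' tsupport f) * B := by
  rw [norm_smul]
  refine (mul_le_of_le_one_right (norm_nonneg _) (norm_toEuclideanCLM_le_one _)).trans ?_
  exact norm_partialFourier_le hfs hB (fun a => hu _) _

theorem continuous_tauKernel_integrand [IsTopologicalGroup K]
    (hact : Continuous fun p : K × A => Multiplicative.toAdd (act p.1) p.2)
    (hν : Continuous ν) (hfc : Continuous f) (hfs : HasCompactSupport f) {u : A → ℂ}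
    (hu : Continuous u) :
    Continuous fun q : (K × K) × L =>
      partialFourier μA f (q.1.1 * q.2 * q.1.2⁻¹)
          (fun a => u (Multiplicative.toAdd (act q.1.2⁻¹) a)) •
        Matrix.toEuclideanCLM (n := Fin d) (𝕜 := ℂ) (ν q.2 : Matrix (Fin d) (Fin d) ℂ) := by
  refine (continuous_partialFourier (k := fun q : (K × K) × L => q.1.1 * q.2 * q.1.2⁻¹) hfc hfs
    (by fun_prop) ?_).smul
    (continuous_toEuclideanCLM.comp (continuous_subtype_val.comp (hν.comp continuous_snd)))
  exact hu.comp (hact.comp ((continuous_snd.comp (continuous_fst.comp continuous_fst)).inv.prodMk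
    continuous_snd))

variable [MeasurableSpace K] {μL : Measure L} [IsFiniteMeasure μL]

theorem norm_tauKernel_le [T2Space A] (hfs : HasCompactSupport f) {B : ℝ} (hB : ∀ p, ‖f p‖ ≤ B)
    {u : A → ℂ} (hu : ∀ a, ‖u a‖ ≤ 1) (x y : K) :
    ‖tauKernel μA act u μL ν f x y‖ ≤ μA.real (Prod.snd '' tsupport f) * B * μL.real Set.univ :=
  norm_integral_le_of_norm_le_const (ae_of_all _ (norm_tauKernel_integrand_le hfs hB hu x y))

variable [IsTopologicalGroup K] [OpensMeasurableSpace K]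

theorem tendsto_tauKernel [T2Space A]
    (hact : Continuous fun p : K × A => Multiplicative.toAdd (act p.1) p.2)
    (hν : Continuous ν) (hfc : Continuous f) (hfs : HasCompactSupport f) {B : ℝ}
    (hB : ∀ p, ‖f p‖ ≤ B) {U : ℕ → A → ℂ} {u : A → ℂ}
    (hU : ∀ n, Continuous (U n)) (hU1 : ∀ n a, ‖U n a‖ ≤ 1)
    (hlim : ∀ a, Tendsto (fun n => U n a) atTop (𝓝 (u a))) (x y : K) :
    Tendsto (fun n => tauKernel μA act (U n) μL ν f x y) atTop
      (𝓝 (tauKernel μA act u μL ν f x y)) := by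
  refine tendsto_integral_of_dominated_convergence (fun _ => μA.real (Prod.snd '' tsupport f) * B)
    (fun n => ((continuous_tauKernel_integrand hact hν hfc hfs (hU n)).comp
      (Continuous.prodMk_right (x, y))).aestronglyMeasurable)
    (integrable_const _)
    (fun n => ae_of_all _ (norm_tauKernel_integrand_le hfs hB (hU1 n) x y))
    (ae_of_all _ fun l => ?_)
  have hfourier := tendsto_partialFourier (μA := μA) hfc hfs hB
    (U := fun n a => U n (Multiplicative.toAdd (act y⁻¹) a))
    (u := fun a => u (Multiplicative.toAdd (act y⁻¹) a))
    (fun n => (hU n).comp (hact.comp (Continuous.prodMk_right _))) (fun n a => hU1 n _)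
    (fun a => hlim _) (x * l * y⁻¹)
  exact hfourier.smul_const _

variable [CompactSpace L]

theorem continuous_tauKernel
    (hact : Continuous fun p : K × A => Multiplicative.toAdd (act p.1) p.2)
    (hν : Continuous ν) (hfc : Continuous f) (hfs : HasCompactSupport f) {u : A → ℂ}
    (hu : Continuous u) :
    Continuous fun p : K × K => tauKernel μA act u μL ν f p.1 p.2 :=
  continuous_integral_of_compactSpace (continuous_tauKernel_integrand hact hν hfc hfs hu)

theorem tauOp_eq_integral_tauKernel (μK : Measure K)
    (hact : Continuous fun p : K × A => Multiplicative.toAdd (act p.1) p.2)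
    (hν : Continuous ν) (hfc : Continuous f) (hfs : HasCompactSupport f) {u : A → ℂ}
    (hu : Continuous u) (φ : K → EuclideanSpace ℂ (Fin d)) (x : K) :
    tauOp μK μA act u μL ν f φ x = ∫ y, tauKernel μA act u μL ν f x y (φ y) ∂μK := by
  refine integral_congr_ae (ae_of_all _ fun y => ?_)
  beta_reduce
  rw [tauKernel, ContinuousLinearMap.integral_apply]
  · rfl
  · exact ((continuous_tauKernel_integrand hact hν hfc hfs hu).comp
      (Continuous.prodMk_right (x, y))).integrable_of_hasCompactSupport
      (HasCompactSupport.of_compactSpace _)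

theorem integrable_tauKernel_apply [T2Space A] {μK : Measure K}
    (hact : Continuous fun p : K × A => Multiplicative.toAdd (act p.1) p.2)
    (hν : Continuous ν) (hfc : Continuous f) (hfs : HasCompactSupport f) {u : A → ℂ}
    (hu : Continuous u) (hu1 : ∀ a, ‖u a‖ ≤ 1) {φ : K → EuclideanSpace ℂ (Fin d)}
    (hφ : Integrable φ μK) (x : K) :
    Integrable (fun y => tauKernel μA act u μL ν f x y (φ y)) μK := by
  obtain ⟨B, hB⟩ := hfs.exists_bound_of_continuous hfc
  exact (ContinuousLinearMap.id ℂ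
    (EuclideanSpace ℂ (Fin d) →L[ℂ] EuclideanSpace ℂ (Fin d))).integrable_of_bilin_of_bdd_left _
    ((continuous_tauKernel hact hν hfc hfs hu).comp
      (Continuous.prodMk_right x)).aestronglyMeasurable
    (ae_of_all _ (norm_tauKernel_le hfs hB hu1 x)) hφ

theorem tauOp_sub_tauOp [T2Space A] {μK : Measure K}
    (hact : Continuous fun p : K × A => Multiplicative.toAdd (act p.1) p.2)
    (hν : Continuous ν) (hfc : Continuous f) (hfs : HasCompactSupport f) {u v : A → ℂ}
    (hu : Continuous u) (hu1 : ∀ a, ‖u a‖ ≤ 1) (hv : Continuous v) (hv1 : ∀ a, ‖v a‖ ≤ 1)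
    {φ : K → EuclideanSpace ℂ (Fin d)} (hφ : Integrable φ μK) (x : K) :
    tauOp μK μA act u μL ν f φ x - tauOp μK μA act v μL ν f φ x =
      ∫ y, (tauKernel μA act u μL ν f x y - tauKernel μA act v μL ν f x y) (φ y) ∂μK := by
  rw [tauOp_eq_integral_tauKernel μK hact hν hfc hfs hu,
    tauOp_eq_integral_tauKernel μK hact hν hfc hfs hv,
    ← integral_sub (integrable_tauKernel_apply hact hν hfc hfs hu hu1 hφ x)
      (integrable_tauKernel_apply hact hν hfc hfs hv hv1 hφ x)]
  rfl

theorem eLpNorm_tauOp_sub_tauOp_le [T2Space A] {μK : Measure K} [IsFiniteMeasure μK]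
    (hact : Continuous fun p : K × A => Multiplicative.toAdd (act p.1) p.2)
    (hν : Continuous ν) (hfc : Continuous f) (hfs : HasCompactSupport f) {u v : A → ℂ}
    (hu : Continuous u) (hu1 : ∀ a, ‖u a‖ ≤ 1) (hv : Continuous v) (hv1 : ∀ a, ‖v a‖ ≤ 1)
    {φ : K → EuclideanSpace ℂ (Fin d)} (hφ : MemLp φ 2 μK) :
    eLpNorm (fun x => tauOp μK μA act u μL ν f φ x - tauOp μK μA act v μL ν f φ x) 2 μK ≤
      kernelL2Norm μK μK
          (fun x y => tauKernel μA act u μL ν f x y - tauKernel μA act v μL ν f x y) *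
        eLpNorm φ 2 μK := by
  simp_rw [tauOp_sub_tauOp hact hν hfc hfs hu hu1 hv hv1 (hφ.integrable one_le_two)]
  refine eLpNorm_integral_clm_apply_le (fun x => ?_) hφ
  exact (((continuous_tauKernel hact hν hfc hfs hu).sub
    (continuous_tauKernel hact hν hfc hfs hv)).comp
      (Continuous.prodMk_right x)).aestronglyMeasurable

theorem tendsto_kernelL2Norm_tauKernel_sub [T2Space A] [CompactSpace K] {μK : Measure K}
    [IsFiniteMeasure μK] (hact : Continuous fun p : K × A => Multiplicative.toAdd (act p.1) p.2)
    (hν : Continuous ν) (hfc : Continuous f) (hfs : HasCompactSupport f) {U : ℕ → A → ℂ}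
    {u : A → ℂ} (hU : ∀ n, Continuous (U n)) (hU1 : ∀ n a, ‖U n a‖ ≤ 1)
    (hlim : ∀ a, Tendsto (fun n => U n a) atTop (𝓝 (u a))) (hu : Continuous u)
    (hu1 : ∀ a, ‖u a‖ ≤ 1) :
    Tendsto (fun n => kernelL2Norm μK μK
      (fun x y => tauKernel μA act (U n) μL ν f x y - tauKernel μA act u μL ν f x y))
      atTop (𝓝 0) := by
  obtain ⟨B, hB⟩ := hfs.exists_bound_of_continuous hfc
  refine tendsto_kernelL2Norm_zero
    (fun n => (continuous_tauKernel hact hν hfc hfs (hU n)).sub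
      (continuous_tauKernel hact hν hfc hfs hu))
    (fun n x y => norm_sub_le_of_le (norm_tauKernel_le hfs hB (hU1 n) x y)
      (norm_tauKernel_le hfs hB hu1 x y))
    (fun x y => ?_)
  simpa using (tendsto_tauKernel (μA := μA) (μL := μL) hact hν hfc hfs hB hU hU1 hlim x y).sub_const
    (tauKernel μA act u μL ν f x y)

end TauKernel

theorem stmt15_general {K A : Type} [Group K] [TopologicalSpace K] [IsTopologicalGroup K]
    [CompactSpace K] [MeasurableSpace K] [BorelSpace K]
    (μK : Measure K) [IsProbabilityMeasure μK]
    [AddCommGroup A] [TopologicalSpace A]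
    [T2Space A] [MeasurableSpace A] [BorelSpace A]
    (μA : Measure A) [μA.IsAddHaarMeasure]
    (act : K →* Multiplicative (AddAut A)) (hact : Continuous fun p : K × A => Multiplicative.toAdd (act p.1) p.2)
    (L : Subgroup K) (hL : IsClosed (L : Set K))
    (μL : Measure ↥L) [IsProbabilityMeasure μL]
    (d : ℕ)
    (ν : ↥L →* Matrix.unitaryGroup (Fin d) ℂ) (hν : Continuous ν)
    (f : K × A → ℂ) (hfc : Continuous f) (hfs : HasCompactSupport f)
    (χ : ℕ → A → ℂ) (χinf : A → ℂ)
    (hχnorm : ∀ m a, ‖χ m a‖ = 1)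
    (hχcont : ∀ m, Continuous (χ m))
    (hχinfnorm : ∀ a, ‖χinf a‖ = 1)
    (hχinfcont : Continuous χinf)
    (hconv : ∀ a : A, Filter.Tendsto (fun m => χ m a) Filter.atTop (nhds (χinf a))) :
    ∀ ε > (0 : ℝ), ∃ M : ℕ, ∀ m ≥ M,
      ∀ φ : K → EuclideanSpace ℂ (Fin d), MemLp φ 2 μK →
        eLpNorm (fun x => tauOp μK μA act (χ m) μL ν f φ x -
            tauOp μK μA act χinf μL ν f φ x) 2 μK ≤
          ENNReal.ofReal ε * eLpNorm φ 2 μK := by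
  intro ε hε
  have : CompactSpace L := isCompact_iff_compactSpace.mp hL.isCompact
  have hχ1 : ∀ m a, ‖χ m a‖ ≤ 1 := fun m a => (hχnorm m a).le
  have hχinf1 : ∀ a, ‖χinf a‖ ≤ 1 := fun a => (hχinfnorm a).le
  have hHS := tendsto_kernelL2Norm_tauKernel_sub (μA := μA) (μK := μK) (μL := μL) hact hν hfc hfs
    hχcont hχ1 hconv hχinfcont hχinf1
  obtain ⟨M, hM⟩ := eventually_atTop.1 (hHS.eventually (gt_mem_nhds (ENNReal.ofReal_pos.2 hε)))
  refine ⟨M, fun m hm φ hφ => ?_⟩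
  calc eLpNorm (fun x => tauOp μK μA act (χ m) μL ν f φ x -
        tauOp μK μA act χinf μL ν f φ x) 2 μK
      ≤ kernelL2Norm μK μK (fun x y =>
          tauKernel μA act (χ m) μL ν f x y - tauKernel μA act χinf μL ν f x y) * eLpNorm φ 2 μK :=
        eLpNorm_tauOp_sub_tauOp_le hact hν hfc hfs (hχcont m) (hχ1 m) hχinfcont hχinf1 hφ
    _ ≤ ENNReal.ofReal ε * eLpNorm φ 2 μK := by
        gcongr
        exact (hM m hm).le

/-- If `f ∈ C_c(K × A)` and `(χ_m)` is a sequence of unitary characters of `A`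
converging pointwise to a unitary character `χ_∞`, all fixed by the closed
subgroup `L ⊆ K`, then the operators `τ_{ν,χ_m}(f)` converge to
`τ_{ν,χ_∞}(f)` in the operator norm of `B(L²(K, ℂ^d))`. -/
theorem stmt15 {K A : Type} [Group K] [TopologicalSpace K] [IsTopologicalGroup K]
    [CompactSpace K] [T2Space K] [MeasurableSpace K] [BorelSpace K]
    (μK : Measure K) [μK.IsHaarMeasure] [IsProbabilityMeasure μK]
    [AddCommGroup A] [TopologicalSpace A] [IsTopologicalAddGroup A]
    [LocallyCompactSpace A] [T2Space A] [MeasurableSpace A] [BorelSpace A]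
    (μA : Measure A) [μA.IsAddHaarMeasure]
    (act : K →* Multiplicative (AddAut A)) (hact : Continuous fun p : K × A => Multiplicative.toAdd (act p.1) p.2)
    (L : Subgroup K) (hL : IsClosed (L : Set K))
    (μL : Measure ↥L) [μL.IsHaarMeasure] [IsProbabilityMeasure μL]
    (d : ℕ) (hd : 0 < d)
    (ν : ↥L →* Matrix.unitaryGroup (Fin d) ℂ) (hν : Continuous ν)
    (f : K × A → ℂ) (hfc : Continuous f) (hfs : HasCompactSupport f)
    (χ : ℕ → A → ℂ) (χinf : A → ℂ)
    (hχnorm : ∀ m a, ‖χ m a‖ = 1)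
    (hχmul : ∀ m a b, χ m (a + b) = χ m a * χ m b)
    (hχcont : ∀ m, Continuous (χ m))
    (hχinfnorm : ∀ a, ‖χinf a‖ = 1)
    (hχinfmul : ∀ a b, χinf (a + b) = χinf a * χinf b)
    (hχinfcont : Continuous χinf)
    (hLχ : ∀ (m : ℕ) (l : ↥L) (a : A), χ m (Multiplicative.toAdd (act (l : K)⁻¹) a) = χ m a)
    (hLχinf : ∀ (l : ↥L) (a : A), χinf (Multiplicative.toAdd (act (l : K)⁻¹) a) = χinf a)
    (hconv : ∀ a : A, Filter.Tendsto (fun m => χ m a) Filter.atTop (nhds (χinf a))) :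
    ∀ ε > (0 : ℝ), ∃ M : ℕ, ∀ m ≥ M,
      ∀ φ : K → EuclideanSpace ℂ (Fin d), MemLp φ 2 μK →
        eLpNorm (fun x => tauOp μK μA act (χ m) μL ν f φ x -
            tauOp μK μA act χinf μL ν f φ x) 2 μK ≤
          ENNReal.ofReal ε * eLpNorm φ 2 μK :=
  stmt15_general μK μA act hact L hL μL d ν hν f hfc hfs χ χinf hχnorm hχcont hχinfnorm hχinfcont
    hconv
end
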